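/- For any rationals a1, a2, c satisfying (1/2^10)·a1 + (1/4)·(14760/11)·c = -447232/(19·17·11·7²·5²·3) and (1/2^11)·a2 + (1/8)·(19408720/(7007·27))·c = -328099328/(19·17·13·11²·7³·5²·3⁶), the vectors (a1, 14760/11) and (a2, 19408720/(7007·27)) in ℚ² are linearly independent. -/
import Mathlib


/-- For any rationals a1, a2, c satisfying equations (4.4) and (4.5),
the vectors (a1, 14760/11) and (a2, 19408720/(7007·27)) in ℚ² are linearly
independent. -/
theorem stmt7 (a1 a2 c : ℚ)
    (h1 : (1 / 2 ^ 10) * a1 + (1 / 4) * (14760 / 11) * c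
        = -447232 / (19 * 17 * 11 * 7 ^ 2 * 5 ^ 2 * 3))
    (h2 : (1 / 2 ^ 11) * a2 + (1 / 8) * (19408720 / (7007 * 27)) * c
        = -328099328 / (19 * 17 * 13 * 11 ^ 2 * 7 ^ 3 * 5 ^ 2 * 3 ^ 6)) :
    LinearIndependent ℚ ![(a1, (14760 / 11 : ℚ)), (a2, (19408720 / (7007 * 27) : ℚ))] := by
  rw [linearIndependent_fin2]
  constructor
  · simp only [Matrix.cons_val_one, Matrix.head_cons, ne_eq, Prod.mk.injEq, not_and]
    intro h
    have := congrArg Prod.snd h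
    norm_num at this
  · intro a
    simp only [Matrix.cons_val_zero, Matrix.cons_val_one, Matrix.head_cons, Prod.smul_mk,
      smul_eq_mul, ne_eq, Prod.mk.injEq, not_and]
    intro ha1 ha2
    have hval : a = 6346431 / 485218 := by
      have h : a * (19408720 / (7007 * 27)) = 14760 / 11 := ha2
      field_simp at h
      linarith
    subst hval
    linarith [h1, h2, ha1]
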